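/- arXiv:2405.09831 — 7 statements merged into one kernel-verified Lean document; each statement's English description precedes it below -/
import Mathlib

section
/- Let φ(s) = log(∑_{i=0}^n e^{a_i s + b_i}) for fixed reals a_0,…,a_n, b_0,…,b_n. Then φ''(s) ≥ 0 for all s, and |φ'''(s)| ≤ 3√2 · (max_{0≤i≤n} |a_i|) · φ''(s) for all s ∈ ℝ. -/
/-!
With Gibbs weights `p i ∝ exp (a i * s + b i)`, the derivatives of `φ` are the cumulants of the
law of `a` under `p`: `φ'` is its mean `μ`, `φ''` its variance `∑ p i (a i - μ)²` and `φ'''` its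
third central moment `∑ p i (a i - μ)³`. Since `|μ| ≤ M := maxᵢ |a i|`, every `|a i - μ| ≤ 2M`,
so `|φ'''| ≤ 2M φ'' ≤ 3√2 M φ''`.
-/

open Real Finset

section WeightedMoments

variable {ι : Type*} [Fintype ι] (p x : ι → ℝ) {μ : ℝ}

theorem sum_mul_sub_sq_eq (hp : ∑ i, p i = 1) (hμ : ∑ i, p i * x i = μ) :
    ∑ i, p i * (x i - μ) ^ 2 = ∑ i, p i * x i ^ 2 - μ ^ 2 := by
  have expand : ∀ i, p i * (x i - μ) ^ 2 = p i * x i ^ 2 - 2 * μ * (p i * x i) + μ ^ 2 * p i :=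
    fun i => by ring
  simp only [expand, sum_add_distrib, sum_sub_distrib, ← mul_sum, hμ, hp]
  ring

theorem sum_mul_sub_pow_three_eq (hp : ∑ i, p i = 1) (hμ : ∑ i, p i * x i = μ) :
    ∑ i, p i * (x i - μ) ^ 3 = ∑ i, p i * x i ^ 3 - 3 * μ * ∑ i, p i * x i ^ 2 + 2 * μ ^ 3 := by
  have expand : ∀ i, p i * (x i - μ) ^ 3 =
      p i * x i ^ 3 - 3 * μ * (p i * x i ^ 2) + 3 * μ ^ 2 * (p i * x i) - μ ^ 3 * p i :=
    fun i => by ring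
  simp only [expand, sum_add_distrib, sum_sub_distrib, ← mul_sum, hμ, hp]
  ring

variable {p x}

theorem abs_sum_mul_le_of_abs_le {M : ℝ} (hp0 : ∀ i, 0 ≤ p i) (hp : ∑ i, p i = 1)
    (hx : ∀ i, |x i| ≤ M) : |∑ i, p i * x i| ≤ M :=
  calc |∑ i, p i * x i| ≤ ∑ i, |p i * x i| := abs_sum_le_sum_abs _ _
    _ ≤ ∑ i, p i * M := sum_le_sum fun i _ => by
        rw [abs_mul, abs_of_nonneg (hp0 i)]
        exact mul_le_mul_of_nonneg_left (hx i) (hp0 i)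
    _ = M := by rw [← sum_mul, hp, one_mul]

theorem abs_sum_mul_sub_pow_three_le {c C : ℝ} (hp0 : ∀ i, 0 ≤ p i) (hx : ∀ i, |x i - c| ≤ C) :
    |∑ i, p i * (x i - c) ^ 3| ≤ C * ∑ i, p i * (x i - c) ^ 2 :=
  calc |∑ i, p i * (x i - c) ^ 3| ≤ ∑ i, |p i * (x i - c) ^ 3| := abs_sum_le_sum_abs _ _
    _ = ∑ i, |x i - c| * (p i * (x i - c) ^ 2) := sum_congr rfl fun i _ => by
        rw [abs_mul, abs_of_nonneg (hp0 i), abs_pow, pow_succ, sq_abs]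
        ring
    _ ≤ ∑ i, C * (p i * (x i - c) ^ 2) := sum_le_sum fun i _ =>
        mul_le_mul_of_nonneg_right (hx i) (mul_nonneg (hp0 i) (sq_nonneg _))
    _ = C * ∑ i, p i * (x i - c) ^ 2 := (mul_sum _ _ _).symm

end WeightedMoments

namespace LogSumExp

variable {ι : Type*} [Fintype ι] (a b : ι → ℝ)

noncomputable def expMoment (k : ℕ) (t : ℝ) : ℝ := ∑ i, exp (a i * t + b i) * a i ^ k

noncomputable def gibbs (t : ℝ) (i : ι) : ℝ := exp (a i * t + b i) / expMoment a b 0 t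

noncomputable def gibbsMoment (k : ℕ) (t : ℝ) : ℝ := expMoment a b k t / expMoment a b 0 t

theorem hasDerivAt_expMoment (k : ℕ) (t : ℝ) :
    HasDerivAt (expMoment a b k) (expMoment a b (k + 1) t) t := by
  refine (HasDerivAt.fun_sum (u := univ) fun i _ =>
    ((((hasDerivAt_id t).const_mul (a i)).add_const (b i)).exp.mul_const (a i ^ k))).congr_deriv ?_
  exact sum_congr rfl fun i _ => by simp only [id, mul_one]; ring

theorem expMoment_zero_pos [Nonempty ι] (t : ℝ) : 0 < expMoment a b 0 t :=
  sum_pos (fun i _ => by simpa using exp_pos (a i * t + b i)) univ_nonempty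

theorem gibbs_pos [Nonempty ι] (t : ℝ) (i : ι) : 0 < gibbs a b t i :=
  div_pos (exp_pos _) (expMoment_zero_pos a b t)

theorem gibbsMoment_eq_sum_gibbs (k : ℕ) (t : ℝ) :
    gibbsMoment a b k t = ∑ i, gibbs a b t i * a i ^ k := by
  simp only [gibbsMoment, gibbs, expMoment, sum_div]
  exact sum_congr rfl fun i _ => (div_mul_eq_mul_div _ _ _).symm

theorem sum_gibbs [Nonempty ι] (t : ℝ) : ∑ i, gibbs a b t i = 1 := by
  simpa [gibbsMoment] using
    ((gibbsMoment_eq_sum_gibbs a b 0 t).symm.trans (div_self (expMoment_zero_pos a b t).ne'))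

theorem sum_gibbs_mul (t : ℝ) : ∑ i, gibbs a b t i * a i = gibbsMoment a b 1 t := by
  simpa using (gibbsMoment_eq_sum_gibbs a b 1 t).symm

theorem hasDerivAt_gibbsMoment [Nonempty ι] (k : ℕ) (t : ℝ) :
    HasDerivAt (gibbsMoment a b k)
      (gibbsMoment a b (k + 1) t - gibbsMoment a b k t * gibbsMoment a b 1 t) t := by
  have hZ := (expMoment_zero_pos a b t).ne'
  refine ((hasDerivAt_expMoment a b k t).div (hasDerivAt_expMoment a b 0 t) hZ).congr_deriv ?_
  simp only [gibbsMoment]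
  field_simp

theorem deriv_log_expMoment_zero [Nonempty ι] :
    deriv (fun t => log (expMoment a b 0 t)) = gibbsMoment a b 1 :=
  funext fun t =>
    ((hasDerivAt_expMoment a b 0 t).log (expMoment_zero_pos a b t).ne').deriv

theorem iteratedDeriv_two_log_expMoment_zero [Nonempty ι] :
    iteratedDeriv 2 (fun t => log (expMoment a b 0 t)) =
      fun t => gibbsMoment a b 2 t - gibbsMoment a b 1 t ^ 2 := by
  rw [iteratedDeriv_succ, iteratedDeriv_one, deriv_log_expMoment_zero]
  exact funext fun t => by
    simpa [sq] using (hasDerivAt_gibbsMoment a b 1 t).deriv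

theorem iteratedDeriv_three_log_expMoment_zero [Nonempty ι] (t : ℝ) :
    iteratedDeriv 3 (fun t => log (expMoment a b 0 t)) t =
      gibbsMoment a b 3 t - 3 * gibbsMoment a b 1 t * gibbsMoment a b 2 t +
        2 * gibbsMoment a b 1 t ^ 3 := by
  rw [iteratedDeriv_succ, iteratedDeriv_two_log_expMoment_zero]
  have h := (hasDerivAt_gibbsMoment a b 2 t).fun_sub ((hasDerivAt_gibbsMoment a b 1 t).fun_pow 2)
  rw [h.deriv]
  ring

theorem iteratedDeriv_two_log_expMoment_zero_eq_variance [Nonempty ι] (t : ℝ) :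
    iteratedDeriv 2 (fun t => log (expMoment a b 0 t)) t =
      ∑ i, gibbs a b t i * (a i - gibbsMoment a b 1 t) ^ 2 := by
  rw [sum_mul_sub_sq_eq _ _ (sum_gibbs a b t) (sum_gibbs_mul a b t), ← gibbsMoment_eq_sum_gibbs,
    iteratedDeriv_two_log_expMoment_zero]

theorem iteratedDeriv_three_log_expMoment_zero_eq_centralMoment [Nonempty ι] (t : ℝ) :
    iteratedDeriv 3 (fun t => log (expMoment a b 0 t)) t =
      ∑ i, gibbs a b t i * (a i - gibbsMoment a b 1 t) ^ 3 := by
  rw [sum_mul_sub_pow_three_eq _ _ (sum_gibbs a b t) (sum_gibbs_mul a b t),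
    ← gibbsMoment_eq_sum_gibbs, ← gibbsMoment_eq_sum_gibbs, iteratedDeriv_three_log_expMoment_zero]

end LogSumExp

open LogSumExp in
theorem stmt_1 (n : ℕ) (a b : Fin (n + 1) → ℝ) (φ : ℝ → ℝ)
    (hφ : ∀ s, φ s = Real.log (∑ i, Real.exp (a i * s + b i))) (s : ℝ) :
    0 ≤ iteratedDeriv 2 φ s ∧
    |iteratedDeriv 3 φ s| ≤
      3 * Real.sqrt 2 * (Finset.univ.sup' Finset.univ_nonempty fun i => |a i|) *
        iteratedDeriv 2 φ s := by
  set M := Finset.univ.sup' Finset.univ_nonempty fun i => |a i|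
  obtain rfl : φ = fun t => log (expMoment a b 0 t) := funext fun t => by simp [hφ, expMoment]
  set μ := gibbsMoment a b 1 s
  have hp0 : ∀ i, 0 ≤ gibbs a b s i := fun i => (gibbs_pos a b s i).le
  have ha : ∀ i, |a i| ≤ M := fun i => le_sup' (fun j => |a j|) (mem_univ i)
  have hμ : |μ| ≤ M := by
    simpa only [μ, sum_gibbs_mul] using abs_sum_mul_le_of_abs_le hp0 (sum_gibbs a b s) ha
  have hdev : ∀ i, |a i - μ| ≤ 2 * M := fun i =>
    (abs_sub _ _).trans (by linarith [ha i])
  have hvar : 0 ≤ iteratedDeriv 2 (fun t => log (expMoment a b 0 t)) s := by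
    rw [iteratedDeriv_two_log_expMoment_zero_eq_variance]
    exact sum_nonneg fun i _ => mul_nonneg (hp0 i) (sq_nonneg _)
  have hconst : 2 * M ≤ 3 * √2 * M := by
    have : (1 : ℝ) ≤ √2 := one_le_sqrt.mpr one_le_two
    nlinarith [(abs_nonneg (a 0)).trans (ha 0)]
  refine ⟨hvar, ?_⟩
  calc _ ≤ 2 * M * iteratedDeriv 2 (fun t => log (expMoment a b 0 t)) s := by
        rw [iteratedDeriv_three_log_expMoment_zero_eq_centralMoment,
          iteratedDeriv_two_log_expMoment_zero_eq_variance]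
        exact abs_sum_mul_sub_pow_three_le hp0 hdev
    _ ≤ _ := mul_le_mul_of_nonneg_right hconst hvar
end

section
/- The multinomial logistic loss ℓ(w) = -∑_{i∈S} y_i log(exp(x_i^⊤ w)/(v_0 + ∑_{j∈S} exp(x_j^⊤ w))), where v_0 > 0, y_i ∈ {0,1}, and each ‖x_i‖₂ ≤ 1, is a 3√2-self-concordant-like function: for any w, δ ∈ ℝ^d, letting ψ(s) = ℓ(w + sδ), one has |ψ'''(s)| ≤ 3√2 ‖δ‖₂ ψ''(s). -/
/-!
Along the line `w + t • δ` the loss is an affine function of `t` plus `(∑ i, y i) * log Z t`, where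
`Z t = v0 + ∑ j, exp (⟪x j, w⟫ + t * ⟪x j, δ⟫)` is an exponential sum in which the outside option
has slope `0`. The second and third derivatives of `log Z` are the variance and the third central
moment of the slopes under the tilted distribution `∝ exp (⟪x j, w⟫ + t * ⟪x j, δ⟫)`. All slopes,
and hence their mean, lie in `[-‖δ‖, ‖δ‖]`, so each slope is within `2‖δ‖` of the mean and the third
central moment is at most `2‖δ‖` times the variance; `2 ≤ 3√2` finishes.
-/

open scoped RealInnerProductSpace

open Finset Real

section WeightedMoments

variable {ι : Type*} (T : Finset ι) (q b : ι → ℝ)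

lemma sum_mul_sub_sq_mul_sum {m : ℝ} (hm : m * ∑ j ∈ T, q j = ∑ j ∈ T, q j * b j) :
    (∑ j ∈ T, q j * b j ^ 2) * ∑ j ∈ T, q j - (∑ j ∈ T, q j * b j) ^ 2 =
      (∑ j ∈ T, q j) * ∑ j ∈ T, q j * (b j - m) ^ 2 := by
  have hexp : ∑ j ∈ T, q j * (b j - m) ^ 2 =
      ∑ j ∈ T, q j * b j ^ 2 - 2 * m * ∑ j ∈ T, q j * b j + m ^ 2 * ∑ j ∈ T, q j := by
    simp only [mul_sum, ← sum_sub_distrib, ← sum_add_distrib]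
    exact sum_congr rfl fun j _ => by ring
  rw [hexp, ← hm]
  ring

lemma sum_mul_sub_cube_mul_sum_sq {m : ℝ} (hm : m * ∑ j ∈ T, q j = ∑ j ∈ T, q j * b j) :
    (∑ j ∈ T, q j * b j ^ 3) * (∑ j ∈ T, q j) ^ 2
        - 3 * (∑ j ∈ T, q j) * (∑ j ∈ T, q j * b j) * (∑ j ∈ T, q j * b j ^ 2)
        + 2 * (∑ j ∈ T, q j * b j) ^ 3 =
      (∑ j ∈ T, q j) ^ 2 * ∑ j ∈ T, q j * (b j - m) ^ 3 := by
  have hexp : ∑ j ∈ T, q j * (b j - m) ^ 3 =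
      ∑ j ∈ T, q j * b j ^ 3 - 3 * m * ∑ j ∈ T, q j * b j ^ 2
        + 3 * m ^ 2 * ∑ j ∈ T, q j * b j - m ^ 3 * ∑ j ∈ T, q j := by
    simp only [mul_sum, ← sum_sub_distrib, ← sum_add_distrib]
    exact sum_congr rfl fun j _ => by ring
  rw [hexp, ← hm]
  ring

variable {T q b}

lemma abs_sum_mul_le_mul_sum (hq : ∀ j ∈ T, 0 ≤ q j) {B : ℝ} (hb : ∀ j ∈ T, |b j| ≤ B) :
    |∑ j ∈ T, q j * b j| ≤ B * ∑ j ∈ T, q j :=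
  calc |∑ j ∈ T, q j * b j| ≤ ∑ j ∈ T, |q j * b j| := abs_sum_le_sum_abs _ _
    _ ≤ ∑ j ∈ T, B * q j := sum_le_sum fun j hj => by
        rw [abs_mul, abs_of_nonneg (hq j hj), mul_comm]
        exact mul_le_mul_of_nonneg_right (hb j hj) (hq j hj)
    _ = B * ∑ j ∈ T, q j := by rw [mul_sum]

lemma abs_sum_mul_pow_three_le (hq : ∀ j ∈ T, 0 ≤ q j) {K : ℝ} (hb : ∀ j ∈ T, |b j| ≤ K) :
    |∑ j ∈ T, q j * b j ^ 3| ≤ K * ∑ j ∈ T, q j * b j ^ 2 := by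
  have := abs_sum_mul_le_mul_sum (q := fun j => q j * b j ^ 2)
    (fun j hj => mul_nonneg (hq j hj) (sq_nonneg _)) hb
  simpa only [mul_assoc, ← pow_succ] using this

lemma abs_sum_mul_sub_cube_le (hq : ∀ j ∈ T, 0 ≤ q j) (hW : 0 < ∑ j ∈ T, q j) {B : ℝ}
    (hb : ∀ j ∈ T, |b j| ≤ B) {m : ℝ} (hm : m * ∑ j ∈ T, q j = ∑ j ∈ T, q j * b j) :
    |∑ j ∈ T, q j * (b j - m) ^ 3| ≤ 2 * B * ∑ j ∈ T, q j * (b j - m) ^ 2 := by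
  have hmB : |m| ≤ B := by
    have := abs_sum_mul_le_mul_sum hq hb
    rwa [← hm, abs_mul, abs_of_pos hW, mul_le_mul_iff_left₀ hW] at this
  refine abs_sum_mul_pow_three_le hq fun j hj => ?_
  calc |b j - m| ≤ |b j| + |m| := abs_sub _ _
    _ ≤ 2 * B := by linarith [hb j hj]

end WeightedMoments

section ExpMoment

variable {ι : Type*} (T : Finset ι) (p b : ι → ℝ)

noncomputable def expMoment (k : ℕ) (t : ℝ) : ℝ := ∑ j ∈ T, p j * exp (t * b j) * b j ^ k

lemma hasDerivAt_expMoment (k : ℕ) (t : ℝ) :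
    HasDerivAt (expMoment T p b k) (expMoment T p b (k + 1) t) t := by
  unfold expMoment
  exact HasDerivAt.fun_sum fun j _ => ((((hasDerivAt_mul_const (b j)).exp).const_mul (p j)).mul_const (b j ^ k)).congr_deriv
    (by ring)

lemma expMoment_pos {j : ι} (hj : j ∈ T) (hpj : 0 < p j) (hp : ∀ j ∈ T, 0 ≤ p j) (t : ℝ) :
    0 < expMoment T p b 0 t := by
  unfold expMoment
  refine sum_pos' (fun i hi => ?_) ⟨j, hj, ?_⟩
  · simpa using mul_nonneg (hp i hi) (exp_pos _).le
  · simpa using mul_pos hpj (exp_pos _)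

local notation "M" => expMoment T p b

variable {T p b} {t : ℝ}

lemma expMoment_zero : M 0 t = ∑ j ∈ T, p j * exp (t * b j) := by
  simp [expMoment]

lemma expMoment_one : M 1 t = ∑ j ∈ T, p j * exp (t * b j) * b j := by
  simp [expMoment]

lemma hasDerivAt_log_expMoment (hZ : 0 < M 0 t) :
    HasDerivAt (fun t => log (M 0 t)) (M 1 t / M 0 t) t :=
  (hasDerivAt_expMoment T p b 0 t).log hZ.ne'

lemma hasDerivAt_expMoment_mean (hZ : 0 < M 0 t) :
    HasDerivAt (fun t => M 1 t / M 0 t) ((M 2 t * M 0 t - M 1 t ^ 2) / M 0 t ^ 2) t :=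
  ((hasDerivAt_expMoment T p b 1 t).div (hasDerivAt_expMoment T p b 0 t) hZ.ne').congr_deriv
    (by ring)

lemma hasDerivAt_expMoment_variance (hZ : 0 < M 0 t) :
    HasDerivAt (fun t => (M 2 t * M 0 t - M 1 t ^ 2) / M 0 t ^ 2)
      ((M 3 t * M 0 t ^ 2 - 3 * M 0 t * M 1 t * M 2 t + 2 * M 1 t ^ 3) / M 0 t ^ 3) t := by
  have hM := hasDerivAt_expMoment T p b
  refine ((((hM 2 t).fun_mul (hM 0 t)).fun_sub ((hM 1 t).fun_pow 2)).fun_div ((hM 0 t).fun_pow 2)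
    (pow_ne_zero 2 hZ.ne')).congr_deriv ?_
  field_simp
  ring

lemma deriv_deriv_affine_add_mul_log_expMoment (hZ : ∀ t, 0 < M 0 t) (C₀ C₁ c : ℝ) :
    deriv (deriv fun t => C₀ + C₁ * t + c * log (M 0 t)) =
      fun t => c * ((M 2 t * M 0 t - M 1 t ^ 2) / M 0 t ^ 2) := by
  have h₁ : deriv (fun t => C₀ + C₁ * t + c * log (M 0 t)) = fun t => C₁ + c * (M 1 t / M 0 t) :=
    funext fun t => ((((hasDerivAt_id t).const_mul C₁).const_add C₀).add
      ((hasDerivAt_log_expMoment (hZ t)).const_mul c)).deriv.trans (by simp)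
  rw [h₁]
  exact funext fun t => (((hasDerivAt_expMoment_mean (hZ t)).const_mul c).const_add C₁).deriv

lemma expMoment_variance_nonneg (hp : ∀ j ∈ T, 0 ≤ p j) (hZ : 0 < M 0 t) :
    0 ≤ M 2 t * M 0 t - M 1 t ^ 2 := by
  set q : ι → ℝ := fun j => p j * exp (t * b j)
  have hm : M 1 t / M 0 t * ∑ j ∈ T, q j = ∑ j ∈ T, q j * b j := by
    rw [← expMoment_zero, ← expMoment_one]; field_simp
  rw [expMoment_zero] at hZ ⊢
  rw [expMoment_one, expMoment, sum_mul_sub_sq_mul_sum T q b hm]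
  exact mul_nonneg hZ.le (sum_nonneg fun j hj =>
    mul_nonneg (mul_nonneg (hp j hj) (exp_pos _).le) (sq_nonneg _))

lemma abs_expMoment_third_cumulant_le (hp : ∀ j ∈ T, 0 ≤ p j) (hZ : 0 < M 0 t) {B : ℝ}
    (hb : ∀ j ∈ T, |b j| ≤ B) :
    |M 3 t * M 0 t ^ 2 - 3 * M 0 t * M 1 t * M 2 t + 2 * M 1 t ^ 3| ≤
      2 * B * M 0 t * (M 2 t * M 0 t - M 1 t ^ 2) := by
  set q : ι → ℝ := fun j => p j * exp (t * b j)
  have hq : ∀ j ∈ T, 0 ≤ q j := fun j hj => mul_nonneg (hp j hj) (exp_pos _).le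
  have hm : M 1 t / M 0 t * ∑ j ∈ T, q j = ∑ j ∈ T, q j * b j := by
    rw [← expMoment_zero, ← expMoment_one]; field_simp
  rw [expMoment_zero] at hZ ⊢
  rw [expMoment_one, expMoment, expMoment, sum_mul_sub_sq_mul_sum T q b hm,
    sum_mul_sub_cube_mul_sum_sq T q b hm, abs_mul, abs_of_nonneg (sq_nonneg _)]
  have := abs_sum_mul_sub_cube_le hq hZ hb hm
  calc _ ≤ (∑ j ∈ T, q j) ^ 2 * (2 * B * ∑ j ∈ T, q j * (b j - M 1 t / M 0 t) ^ 2) := by gcongr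
    _ = _ := by ring

lemma iteratedDeriv_two_affine_add_mul_log_expMoment (hZ : ∀ t, 0 < M 0 t) (C₀ C₁ c s : ℝ) :
    iteratedDeriv 2 (fun t => C₀ + C₁ * t + c * log (M 0 t)) s =
      c * ((M 2 s * M 0 s - M 1 s ^ 2) / M 0 s ^ 2) := by
  rw [iteratedDeriv_succ', iteratedDeriv_one, deriv_deriv_affine_add_mul_log_expMoment hZ]

lemma iteratedDeriv_three_affine_add_mul_log_expMoment (hZ : ∀ t, 0 < M 0 t) (C₀ C₁ c s : ℝ) :
    iteratedDeriv 3 (fun t => C₀ + C₁ * t + c * log (M 0 t)) s =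
      c * ((M 3 s * M 0 s ^ 2 - 3 * M 0 s * M 1 s * M 2 s + 2 * M 1 s ^ 3) / M 0 s ^ 3) := by
  rw [iteratedDeriv_succ', iteratedDeriv_succ', iteratedDeriv_one,
    deriv_deriv_affine_add_mul_log_expMoment hZ]
  exact ((hasDerivAt_expMoment_variance (hZ s)).const_mul c).deriv

lemma iteratedDeriv_two_affine_add_mul_log_expMoment_nonneg (hp : ∀ j ∈ T, 0 ≤ p j)
    (hZ : ∀ t, 0 < M 0 t) (C₀ C₁ : ℝ) {c : ℝ} (hc : 0 ≤ c) (s : ℝ) :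
    0 ≤ iteratedDeriv 2 (fun t => C₀ + C₁ * t + c * log (M 0 t)) s := by
  rw [iteratedDeriv_two_affine_add_mul_log_expMoment hZ]
  exact mul_nonneg hc (div_nonneg (expMoment_variance_nonneg hp (hZ s)) (pow_pos (hZ s) 2).le)

lemma abs_iteratedDeriv_three_affine_add_mul_log_expMoment_le (hp : ∀ j ∈ T, 0 ≤ p j)
    (hZ : ∀ t, 0 < M 0 t) {B : ℝ} (hb : ∀ j ∈ T, |b j| ≤ B) (C₀ C₁ : ℝ) {c : ℝ} (hc : 0 ≤ c)
    (s : ℝ) :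
    |iteratedDeriv 3 (fun t => C₀ + C₁ * t + c * log (M 0 t)) s| ≤
      2 * B * iteratedDeriv 2 (fun t => C₀ + C₁ * t + c * log (M 0 t)) s := by
  rw [iteratedDeriv_two_affine_add_mul_log_expMoment hZ,
    iteratedDeriv_three_affine_add_mul_log_expMoment hZ, abs_mul, abs_of_nonneg hc, abs_div,
    abs_of_pos (pow_pos (hZ s) 3)]
  have hZs := hZ s
  calc c * (|M 3 s * M 0 s ^ 2 - 3 * M 0 s * M 1 s * M 2 s + 2 * M 1 s ^ 3| / M 0 s ^ 3)
      ≤ c * (2 * B * M 0 s * (M 2 s * M 0 s - M 1 s ^ 2) / M 0 s ^ 3) := by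
        gcongr; exact abs_expMoment_third_cumulant_le hp hZs hb
    _ = 2 * B * (c * ((M 2 s * M 0 s - M 1 s ^ 2) / M 0 s ^ 2)) := by
        field_simp

end ExpMoment

lemma log_exp_div (a : ℝ) {Z : ℝ} (hZ : 0 < Z) : log (exp a / Z) = a - log Z := by
  rw [log_div (exp_pos a).ne' hZ.ne', log_exp]

section MNL

variable {E : Type*} [NormedAddCommGroup E] [InnerProductSpace ℝ E] {ι : Type*} (S : Finset ι)
  (v0 : ℝ) (x : ι → E) (w δ : E)

/- The outside option is the index `none`, with weight `v0` and slope `0`. -/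
lemma add_sum_exp_inner_add_smul_eq_expMoment (t : ℝ) :
    v0 + ∑ j ∈ S, exp ⟪x j, w + t • δ⟫ =
      expMoment S.insertNone (fun o => o.elim v0 fun j => exp ⟪x j, w⟫)
        (fun o => o.elim 0 fun j => ⟪x j, δ⟫) 0 t := by
  simp [expMoment_zero, inner_add_right, inner_smul_right, exp_add, mul_comm]

lemma elim_exp_inner_nonneg (hv0 : 0 ≤ v0) (o : Option ι) :
    0 ≤ o.elim v0 fun j => exp ⟪x j, w⟫ :=
  o.rec hv0 fun _ => (exp_pos _).le

lemma abs_elim_inner_le_norm (hx : ∀ i ∈ S, ‖x i‖ ≤ 1) :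
    ∀ o ∈ S.insertNone, |o.elim 0 fun j => ⟪x j, δ⟫| ≤ ‖δ‖
  | none, _ => by simp
  | some j, hj => (abs_real_inner_le_norm _ _).trans <|
      mul_le_of_le_one_left (norm_nonneg δ) (hx j (some_mem_insertNone.1 hj))

lemma expMoment_insertNone_pos (hv0 : 0 < v0) (t : ℝ) :
    0 < expMoment S.insertNone (fun o => o.elim v0 fun j => exp ⟪x j, w⟫)
      (fun o => o.elim 0 fun j => ⟪x j, δ⟫) 0 t :=
  expMoment_pos _ _ _ none_mem_insertNone hv0
    (fun o _ => elim_exp_inner_nonneg v0 x w hv0.le o) t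

lemma neg_sum_mul_log_softmax_add_smul (hv0 : 0 < v0) (y : ι → ℝ) (t : ℝ) :
    -∑ i ∈ S, y i * log (exp ⟪x i, w + t • δ⟫ / (v0 + ∑ j ∈ S, exp ⟪x j, w + t • δ⟫)) =
      -∑ i ∈ S, y i * ⟪x i, w⟫ + (-∑ i ∈ S, y i * ⟪x i, δ⟫) * t +
        (∑ i ∈ S, y i) * log (expMoment S.insertNone (fun o => o.elim v0 fun j => exp ⟪x j, w⟫)
          (fun o => o.elim 0 fun j => ⟪x j, δ⟫) 0 t) := by
  rw [add_sum_exp_inner_add_smul_eq_expMoment]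
  simp_rw [log_exp_div _ (expMoment_insertNone_pos S v0 x w δ hv0 t), inner_add_right,
    inner_smul_right, mul_sub, mul_add, sum_sub_distrib, sum_add_distrib, ← sum_mul,
    mul_left_comm _ t, ← mul_sum]
  ring

end MNL

theorem stmt_2 {d : ℕ} {ι : Type*} (S : Finset ι) (v0 : ℝ) (hv0 : 0 < v0)
    (x : ι → EuclideanSpace ℝ (Fin d)) (y : ι → ℝ)
    (hx : ∀ i ∈ S, ‖x i‖ ≤ 1) (hy : ∀ i ∈ S, y i = 0 ∨ y i = 1)
    (ℓ : EuclideanSpace ℝ (Fin d) → ℝ)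
    (hℓ : ∀ w, ℓ w = -∑ i ∈ S, y i *
      Real.log (Real.exp ⟪x i, w⟫ / (v0 + ∑ j ∈ S, Real.exp ⟪x j, w⟫)))
    (w δ : EuclideanSpace ℝ (Fin d)) (ψ : ℝ → ℝ)
    (hψ : ∀ s, ψ s = ℓ (w + s • δ)) (s : ℝ) :
    |iteratedDeriv 3 ψ s| ≤ 3 * Real.sqrt 2 * ‖δ‖ * iteratedDeriv 2 ψ s := by
  have hψ_eq : ψ = fun t => -∑ i ∈ S, y i * ⟪x i, w⟫ + (-∑ i ∈ S, y i * ⟪x i, δ⟫) * t +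
      (∑ i ∈ S, y i) * log (expMoment S.insertNone (fun o => o.elim v0 fun j => exp ⟪x j, w⟫)
        (fun o => o.elim 0 fun j => ⟪x j, δ⟫) 0 t) :=
    funext fun t => by rw [hψ, hℓ, neg_sum_mul_log_softmax_add_smul S v0 x w δ hv0]
  have hp (o) (_ : o ∈ S.insertNone) := elim_exp_inner_nonneg v0 x w hv0.le o
  have hZ := expMoment_insertNone_pos S v0 x w δ hv0
  have hy_nonneg : 0 ≤ ∑ i ∈ S, y i :=
    sum_nonneg fun i hi => by rcases hy i hi with h | h <;> simp [h]
  have hsqrt : 1 ≤ √2 := one_le_sqrt.2 one_le_two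
  rw [hψ_eq]
  calc _ ≤ 2 * ‖δ‖ * _ := abs_iteratedDeriv_three_affine_add_mul_log_expMoment_le hp hZ
        (abs_elim_inner_le_norm S x δ hx) _ _ hy_nonneg s
    _ ≤ _ := by
      gcongr
      · exact iteratedDeriv_two_affine_add_mul_log_expMoment_nonneg hp hZ _ _ hy_nonneg s
      · linarith
end

section
/- For the MNL choice probabilities p_i(w) = exp(x_i^⊤ w)/(v_0 + ∑_{j∈S} exp(x_j^⊤ w)) with v_0 > 0, the matrix G(w) = ∑_{i∈S} p_i(w) x_i x_i^⊤ − ∑_{i∈S} ∑_{j∈S} p_i(w) p_j(w) x_i x_j^⊤ is positive semi-definite, and moreover G(w) ⪰ ∑_{i∈S} p_i(w) p_0(w) x_i x_i^⊤, where p_0(w) = v_0/(v_0 + ∑_{j∈S} exp(x_j^⊤ w)). -/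
/-!
Since `∑_j p_j = 1 - p_0`, the matrix `G - ∑ p_i p_0 x_i x_iᵀ` equals
`∑_{i,j} p_i p_j (x_i x_iᵀ - x_i x_jᵀ)`. Symmetrizing in `i, j` and using
`x xᵀ + y yᵀ - x yᵀ - y xᵀ = (x - y)(x - y)ᵀ`, this is
`½ ∑_{i,j} p_i p_j (x_i - x_j)(x_i - x_j)ᵀ`, which is positive semidefinite because the weights are
nonnegative. Adding back the positive semidefinite `∑ p_i p_0 x_i x_iᵀ` gives `G ⪰ 0`.
-/

open Matrix

section

variable {n ι : Type*}

lemma vecMulVec_sub_self_add_swap {R : Type*} [CommRing R] (a b : n → R) :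
    (vecMulVec a a - vecMulVec a b) + (vecMulVec b b - vecMulVec b a) =
      vecMulVec (a - b) (a - b) := by
  rw [sub_vecMulVec, vecMulVec_sub, vecMulVec_sub]
  abel

lemma posSemidef_sum_sum_mul_smul_vecMulVec_sub [Finite n] (s : Finset ι) {p : ι → ℝ}
    (hp : ∀ i ∈ s, 0 ≤ p i) (x : ι → n → ℝ) :
    (∑ i ∈ s, ∑ j ∈ s,
      (p i * p j) • (vecMulVec (x i) (x i) - vecMulVec (x i) (x j))).PosSemidef := by
  have hsymm : (2 : ℝ) • ∑ i ∈ s, ∑ j ∈ s,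
        (p i * p j) • (vecMulVec (x i) (x i) - vecMulVec (x i) (x j)) =
      ∑ i ∈ s, ∑ j ∈ s, (p i * p j) • vecMulVec (x i - x j) (x i - x j) := by
    rw [two_smul]
    nth_rw 2 [Finset.sum_comm]
    simp only [← Finset.sum_add_distrib]
    refine Finset.sum_congr rfl fun i _ ↦ Finset.sum_congr rfl fun j _ ↦ ?_
    rw [mul_comm (p j), ← smul_add, vecMulVec_sub_self_add_swap]
  rw [← inv_smul_smul₀ (two_ne_zero' ℝ) (∑ i ∈ s, _), hsymm]
  refine .smul (posSemidef_sum _ fun i hi ↦ posSemidef_sum _ fun j hj ↦ ?_) (by norm_num)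
  refine .smul ?_ (mul_nonneg (hp i hi) (hp j hj))
  simpa using posSemidef_vecMulVec_self_star (x i - x j)

end

theorem stmt_4 {d : ℕ} {ι : Type*} (S : Finset ι) (v0 : ℝ) (hv0 : 0 < v0)
    (x : ι → Fin d → ℝ) (w : Fin d → ℝ)
    (p : ι → ℝ) (p0 : ℝ)
    (hp : ∀ i, p i = Real.exp (x i ⬝ᵥ w) / (v0 + ∑ j ∈ S, Real.exp (x j ⬝ᵥ w)))
    (hp0 : p0 = v0 / (v0 + ∑ j ∈ S, Real.exp (x j ⬝ᵥ w)))
    (G : Matrix (Fin d) (Fin d) ℝ)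
    (hG : G = ∑ i ∈ S, p i • vecMulVec (x i) (x i) -
      ∑ i ∈ S, ∑ j ∈ S, (p i * p j) • vecMulVec (x i) (x j)) :
    G.PosSemidef ∧ (G - ∑ i ∈ S, (p i * p0) • vecMulVec (x i) (x i)).PosSemidef := by
  have hZ : 0 < v0 + ∑ j ∈ S, Real.exp (x j ⬝ᵥ w) := by positivity
  have hp_nonneg (i : ι) : 0 ≤ p i := by rw [hp]; positivity
  have hp0_nonneg : 0 ≤ p0 := by rw [hp0]; positivity
  have hsum : ∑ j ∈ S, p j = 1 - p0 := by
    simp only [hp, hp0, ← Finset.sum_div]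
    field_simp
    ring
  have hM : (∑ i ∈ S, (p i * p0) • vecMulVec (x i) (x i)).PosSemidef :=
    posSemidef_sum _ fun i _ ↦ .smul (posSemidef_vecMulVec_self_star (x i))
      (mul_nonneg (hp_nonneg i) hp0_nonneg)
  have hGM : G - ∑ i ∈ S, (p i * p0) • vecMulVec (x i) (x i) =
      ∑ i ∈ S, ∑ j ∈ S, (p i * p j) • (vecMulVec (x i) (x i) - vecMulVec (x i) (x j)) := by
    simp only [hG, smul_sub, Finset.sum_sub_distrib, ← Finset.sum_smul, ← Finset.mul_sum, hsum,
      mul_one_sub, sub_smul]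
    abel
  have hGM_psd : (G - ∑ i ∈ S, (p i * p0) • vecMulVec (x i) (x i)).PosSemidef := by
    rw [hGM]
    exact posSemidef_sum_sum_mul_smul_vecMulVec_sub S (fun i _ ↦ hp_nonneg i) x
  exact ⟨sub_add_cancel G _ ▸ hGM_psd.add hM, hGM_psd⟩
end

section
/- Let v_0 > 0, γ = 1/(v_0 + 1), and suppose utilities satisfy u_i ∈ [0, 1] with e^{u_i} ≥ 1 for all items i. Fix a distinguished item i* with reward r_{i*} = 1 and set r_i = γ for all i ≠ i*. Then for every assortment S, the expected revenue R(S) = ∑_{i∈S} e^{u_i} r_i/(v_0 + ∑_{j∈S} e^{u_j}) satisfies R(S) ≤ max_{i∈S} e^{u_i}/(v_0 + max_{i∈S} e^{u_i}). -/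
theorem stmt_9 {ι : Type*} (v0 : ℝ) (hv0 : 0 < v0) (γ : ℝ) (hγ : γ = 1 / (v0 + 1))
    (u : ι → ℝ) (hu : ∀ i, 0 ≤ u i ∧ u i ≤ 1) (hexp : ∀ i, 1 ≤ Real.exp (u i))
    (istar : ι) (r : ι → ℝ) (hr1 : r istar = 1) (hr2 : ∀ i, i ≠ istar → r i = γ)
    (S : Finset ι) (hS : S.Nonempty) :
    (∑ i ∈ S, Real.exp (u i) * r i) / (v0 + ∑ j ∈ S, Real.exp (u j)) ≤
      (S.sup' hS fun i => Real.exp (u i)) / (v0 + S.sup' hS fun i => Real.exp (u i)) := by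
  classical
  set M := S.sup' hS fun i => Real.exp (u i) with hM
  set T := ∑ j ∈ S, Real.exp (u j) with hT
  obtain ⟨i0, hi0⟩ := id hS
  have hM1 : 1 ≤ M := le_trans (hexp i0) (Finset.le_sup' (fun i => Real.exp (u i)) hi0)
  have hT1 : 1 ≤ T := le_trans (hexp i0)
    (Finset.single_le_sum (fun i _ => (Real.exp_pos (u i)).le) hi0)
  have hvT : 0 < v0 + T := by linarith
  have hvM : 0 < v0 + M := by linarith
  have hv1 : 0 < v0 + 1 := by linarith
  rw [div_le_div_iff₀ hvT hvM]
  by_cases hin : istar ∈ S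
  · have ha : Real.exp (u istar) ≤ M := Finset.le_sup' (fun i => Real.exp (u i)) hin
    have ha1 : 1 ≤ Real.exp (u istar) := hexp istar
    have haT : Real.exp (u istar) ≤ T :=
      Finset.single_le_sum (fun i _ => (Real.exp_pos (u i)).le) hin
    have hsum : ∑ i ∈ S, Real.exp (u i) * r i
        = Real.exp (u istar) + γ * (T - Real.exp (u istar)) := by
      rw [← Finset.add_sum_erase S _ hin, hr1, mul_one]
      congr 1
      have : ∀ i ∈ S.erase istar, Real.exp (u i) * r i = γ * Real.exp (u i) := by
        intro i hi
        rw [hr2 i (Finset.ne_of_mem_erase hi), mul_comm]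
      rw [Finset.sum_congr rfl this, ← Finset.mul_sum,
        Finset.sum_erase_eq_sub hin]
    rw [hsum, hγ]
    have key : (Real.exp (u istar) + 1 / (v0 + 1) * (T - Real.exp (u istar))) * (v0 + 1)
        = Real.exp (u istar) * (v0 + 1) + (T - Real.exp (u istar)) := by
      field_simp
    nlinarith [mul_nonneg (mul_nonneg hv0.le (sub_nonneg.2 haT)) (sub_nonneg.2 hM1),
      mul_nonneg hv0.le (sub_nonneg.2 ha), mul_pos hv0 hv1,
      mul_nonneg (mul_nonneg hv0.le hv0.le) (sub_nonneg.2 ha)]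
  · have hsum : ∑ i ∈ S, Real.exp (u i) * r i = γ * T := by
      rw [hT, Finset.mul_sum]
      refine Finset.sum_congr rfl fun i hi => ?_
      rw [hr2 i (fun h => hin (h ▸ hi)), mul_comm]
    rw [hsum, hγ, div_mul_eq_mul_div, div_mul_eq_mul_div, div_le_iff₀ hv1]
    have hT0 : 0 < T := by linarith
    have hM0 : (0:ℝ) ≤ M := by linarith
    nlinarith [mul_nonneg (mul_nonneg hv0.le hT0.le) (sub_nonneg.2 hM1),
      mul_nonneg (mul_nonneg hv0.le hv0.le) hM0, mul_nonneg hv0.le hM0,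
      mul_nonneg hM0 hT0.le]
end

section
/- Let f: ℝ → ℝ be strictly increasing with |f''(z)| ≤ f'(z) for all z in a bounded interval Z. Then for all z₁, z₂ ∈ Z: ∫₀¹ f'(z₁ + v(z₂ − z₁)) dv ≥ f'(z)/(1 + |z₁ − z₂|) for z ∈ {z₁, z₂}. -/
/-!
Since `|f''| ≤ f'`, the function `log f'` is `1`-Lipschitz, i.e. `f' e^t` is nondecreasing and
`f' e^{-t}` is nonincreasing. Hence `f'(z₁ + v (z₂ - z₁)) ≥ f'(z₁) e^{-v s}` with `s = |z₂ - z₁|`,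
and integrating over `v ∈ [0, 1]` gives `f'(z₁) (1 - e^{-s}) / s ≥ f'(z₁) / (1 + s)`, the last
step being `1 + s ≤ e^s`. The case `z = z₂` follows by the substitution `v ↦ 1 - v`.
-/

open Real Set intervalIntegral

lemma integral_exp_neg_mul_eq {s : ℝ} (hs : s ≠ 0) :
    ∫ v in (0 : ℝ)..1, exp (-(v * s)) = s⁻¹ * (1 - exp (-s)) := by
  rw [integral_comp_mul_right (fun x => exp (-x)) hs, smul_eq_mul, zero_mul, one_mul,
    integral_comp_neg (fun x => exp x), integral_exp, neg_zero, exp_zero]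

lemma one_div_one_add_le_integral_exp_neg_mul {s : ℝ} (hs : 0 ≤ s) :
    1 / (1 + s) ≤ ∫ v in (0 : ℝ)..1, exp (-(v * s)) := by
  rcases hs.eq_or_lt with rfl | hs
  · simp
  rw [integral_exp_neg_mul_eq hs.ne', ← div_eq_inv_mul, div_le_div_iff₀ (by positivity) hs]
  have h : (1 + s) * exp (-s) ≤ 1 := by
    rw [← le_div_iff₀ (exp_pos _), exp_neg, div_inv_eq_mul, one_mul, add_comm]
    exact add_one_le_exp s
  linarith

section LogLipschitz

variable {g : ℝ → ℝ} {s : Set ℝ}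

lemma monotoneOn_mul_exp_of_abs_deriv_le (hs : Convex ℝ s) (hgc : ContinuousOn g s)
    (hgd : DifferentiableOn ℝ g (interior s)) (hbound : ∀ x ∈ interior s, |deriv g x| ≤ g x) :
    MonotoneOn (fun t => g t * exp t) s := by
  refine monotoneOn_of_deriv_nonneg hs (hgc.mul continuous_exp.continuousOn)
    (hgd.mul differentiable_exp.differentiableOn) fun x hx => ?_
  have hderiv : HasDerivAt (fun t => g t * exp t) _ x :=
    (hgd.differentiableAt (isOpen_interior.mem_nhds hx)).hasDerivAt.mul (hasDerivAt_exp x)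
  rw [hderiv.deriv, ← add_mul]
  exact mul_nonneg (by linarith [neg_abs_le (deriv g x), hbound x hx]) (exp_pos x).le

lemma antitoneOn_mul_exp_neg_of_abs_deriv_le (hs : Convex ℝ s) (hgc : ContinuousOn g s)
    (hgd : DifferentiableOn ℝ g (interior s)) (hbound : ∀ x ∈ interior s, |deriv g x| ≤ g x) :
    AntitoneOn (fun t => g t * exp (-t)) s := by
  refine antitoneOn_of_deriv_nonpos hs (hgc.mul (continuous_exp.comp continuous_neg).continuousOn)
    (hgd.mul (differentiable_exp.comp differentiable_neg).differentiableOn) fun x hx => ?_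
  have hderiv : HasDerivAt (fun t => g t * exp (-t)) _ x :=
    (hgd.differentiableAt (isOpen_interior.mem_nhds hx)).hasDerivAt.mul (hasDerivAt_neg x).exp
  rw [hderiv.deriv, mul_neg_one, mul_neg, ← sub_eq_add_neg, ← sub_mul]
  exact mul_nonpos_of_nonpos_of_nonneg (by linarith [le_abs_self (deriv g x), hbound x hx])
    (exp_pos _).le

lemma mul_exp_neg_abs_sub_le_of_abs_deriv_le (hs : Convex ℝ s) (hgc : ContinuousOn g s)
    (hgd : DifferentiableOn ℝ g (interior s)) (hbound : ∀ x ∈ interior s, |deriv g x| ≤ g x)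
    {x y : ℝ} (hx : x ∈ s) (hy : y ∈ s) :
    g y * exp (-|x - y|) ≤ g x := by
  rcases le_total y x with hyx | hxy
  · have h := monotoneOn_mul_exp_of_abs_deriv_le hs hgc hgd hbound hy hx hyx
    calc g y * exp (-|x - y|) = g y * exp y * exp (-x) := by
          rw [abs_of_nonneg (sub_nonneg.2 hyx), mul_assoc, ← exp_add]; ring_nf
      _ ≤ g x * exp x * exp (-x) := by gcongr
      _ = g x := by rw [mul_assoc, ← exp_add, add_neg_cancel, exp_zero, mul_one]
  · have h := antitoneOn_mul_exp_neg_of_abs_deriv_le hs hgc hgd hbound hx hy hxy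
    calc g y * exp (-|x - y|) = g y * exp (-y) * exp x := by
          rw [abs_of_nonpos (sub_nonpos.2 hxy), mul_assoc, ← exp_add]; ring_nf
      _ ≤ g x * exp (-x) * exp x := by gcongr
      _ = g x := by rw [mul_assoc, ← exp_add, neg_add_cancel, exp_zero, mul_one]

lemma div_one_add_abs_sub_le_integral_segment (hs : Convex ℝ s) (hg : DifferentiableOn ℝ g s)
    (hbound : ∀ x ∈ s, |deriv g x| ≤ g x) {a b : ℝ} (ha : a ∈ s) (hb : b ∈ s) :
    g a / (1 + |a - b|) ≤ ∫ v in (0 : ℝ)..1, g (a + v * (b - a)) := by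
  have hsegment : MapsTo (fun v => a + v * (b - a)) (Icc 0 1) s := fun v hv => by
    simpa only [smul_eq_mul] using hs.add_smul_sub_mem ha hb hv
  have hpoint : ∀ v ∈ Icc (0 : ℝ) 1, g a * exp (-(v * |b - a|)) ≤ g (a + v * (b - a)) := by
    intro v hv
    have h := mul_exp_neg_abs_sub_le_of_abs_deriv_le hs hg.continuousOn
      (hg.mono interior_subset) (fun x hx => hbound x (interior_subset hx)) (hsegment hv) ha
    rwa [add_sub_cancel_left, abs_mul, abs_of_nonneg hv.1] at h
  have hga : 0 ≤ g a := (abs_nonneg _).trans (hbound a ha)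
  calc g a / (1 + |a - b|) = g a * (1 / (1 + |b - a|)) := by rw [abs_sub_comm, mul_one_div]
    _ ≤ g a * ∫ v in (0 : ℝ)..1, exp (-(v * |b - a|)) :=
        mul_le_mul_of_nonneg_left (one_div_one_add_le_integral_exp_neg_mul (abs_nonneg _)) hga
    _ = ∫ v in (0 : ℝ)..1, g a * exp (-(v * |b - a|)) := (integral_const_mul _ _).symm
    _ ≤ ∫ v in (0 : ℝ)..1, g (a + v * (b - a)) := by
        refine integral_mono_on zero_le_one
          ((by fun_prop : Continuous _).intervalIntegrable _ _) ?_ hpoint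
        refine ContinuousOn.intervalIntegrable ?_
        rw [uIcc_of_le zero_le_one]
        exact hg.continuousOn.comp (by fun_prop) hsegment

end LogLipschitz

lemma integral_segment_comm (g : ℝ → ℝ) (a b : ℝ) :
    ∫ v in (0 : ℝ)..1, g (a + v * (b - a)) = ∫ v in (0 : ℝ)..1, g (b + v * (a - b)) := by
  have h := integral_comp_sub_left (fun v => g (b + v * (a - b))) 1 (a := 0) (b := 1)
  rw [sub_zero, sub_self] at h
  rw [← h]
  congr 1 with v
  ring_nf

theorem stmt_11_general (f : ℝ → ℝ) (A B : ℝ) (hf : ContDiff ℝ 2 f)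
    (hsc : ∀ z ∈ Set.Icc A B, |deriv (deriv f) z| ≤ deriv f z)
    (z₁ z₂ : ℝ) (h₁ : z₁ ∈ Set.Icc A B) (h₂ : z₂ ∈ Set.Icc A B)
    (z : ℝ) (hz : z = z₁ ∨ z = z₂) :
    deriv f z / (1 + |z₁ - z₂|) ≤ ∫ v in (0:ℝ)..1, deriv f (z₁ + v * (z₂ - z₁)) := by
  have hf' : DifferentiableOn ℝ (deriv f) (Icc A B) :=
    ((hf.iterate_deriv' 1 1).differentiable one_ne_zero).differentiableOn
  rcases hz with rfl | rfl
  · exact div_one_add_abs_sub_le_integral_segment (convex_Icc A B) hf' hsc h₁ h₂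
  · rw [abs_sub_comm, integral_segment_comm]
    exact div_one_add_abs_sub_le_integral_segment (convex_Icc A B) hf' hsc h₂ h₁

theorem stmt_11 (f : ℝ → ℝ) (A B : ℝ) (hf : ContDiff ℝ 2 f) (hmono : StrictMono f)
    (hsc : ∀ z ∈ Set.Icc A B, |deriv (deriv f) z| ≤ deriv f z)
    (z₁ z₂ : ℝ) (h₁ : z₁ ∈ Set.Icc A B) (h₂ : z₂ ∈ Set.Icc A B)
    (z : ℝ) (hz : z = z₁ ∨ z = z₂) :
    deriv f z / (1 + |z₁ - z₂|) ≤ ∫ v in (0:ℝ)..1, deriv f (z₁ + v * (z₂ - z₁)) :=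
  stmt_11_general f A B hf hsc z₁ z₂ h₁ h₂ z hz
end

section
/- Let x, x̂ ∈ ℝ^d with ‖x‖₂ ≤ 1, ‖x̂‖₂ ≤ 1, let w ∈ ℝ^d with ‖w‖₂ ≤ 1, and let v_0, K > 0. If x^⊤ w − x̂^⊤ w ≥ δε/√d and (x̂^⊤ w)² ≤ δε/(2√d) for some δ, ε > 0 with x^⊤ w, x̂^⊤ w ∈ [0,1], then K e^{x^⊤ w}/(v_0 + K e^{x^⊤ w}) − K e^{x̂^⊤ w}/(v_0 + K e^{x̂^⊤ w}) ≥ (v_0 K)/(v_0 + Ke)² · (δε)/(2√d). -/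
open scoped RealInnerProductSpace

theorem stmt_14 {d : ℕ} (hd : 0 < d) (x xh w : EuclideanSpace ℝ (Fin d))
    (hx : ‖x‖ ≤ 1) (hxh : ‖xh‖ ≤ 1) (hw : ‖w‖ ≤ 1)
    (v0 K δ ε : ℝ) (hv0 : 0 < v0) (hK : 0 < K) (hδ : 0 < δ) (hε : 0 < ε)
    (hgap : δ * ε / Real.sqrt d ≤ ⟪x, w⟫ - ⟪xh, w⟫)
    (hsq : ⟪xh, w⟫ ^ 2 ≤ δ * ε / (2 * Real.sqrt d))
    (h1 : ⟪x, w⟫ ∈ Set.Icc (0:ℝ) 1) (h2 : ⟪xh, w⟫ ∈ Set.Icc (0:ℝ) 1) :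
    v0 * K / (v0 + K * Real.exp 1) ^ 2 * (δ * ε / (2 * Real.sqrt d)) ≤
      K * Real.exp ⟪x, w⟫ / (v0 + K * Real.exp ⟪x, w⟫) -
        K * Real.exp ⟪xh, w⟫ / (v0 + K * Real.exp ⟪xh, w⟫) := by
  set a := ⟪x, w⟫ with ha
  set b := ⟪xh, w⟫ with hb
  obtain ⟨ha0, ha1⟩ := h1
  obtain ⟨hb0, hb1⟩ := h2
  have hsd : 0 < Real.sqrt d := Real.sqrt_pos.mpr (by exact_mod_cast hd)
  have hea : 0 < Real.exp a := Real.exp_pos a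
  have heb : 0 < Real.exp b := Real.exp_pos b
  have hda : (0:ℝ) < v0 + K * Real.exp a := by positivity
  have hdb : (0:ℝ) < v0 + K * Real.exp b := by positivity
  have hde : (0:ℝ) < v0 + K * Real.exp 1 := by positivity
  -- exp a - exp b ≥ a - b
  have hexp_gap : a - b ≤ Real.exp a - Real.exp b := by
    have h1' : (a - b) + 1 ≤ Real.exp (a - b) := Real.add_one_le_exp _
    have hab : 0 ≤ a - b := le_trans (by positivity) hgap
    have hb1' : (1:ℝ) ≤ Real.exp b := Real.one_le_exp hb0
    have : Real.exp a = Real.exp b * Real.exp (a - b) := by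
      rw [← Real.exp_add]; ring_nf
    nlinarith [Real.exp_pos (a - b)]
  have hgap2 : δ * ε / (2 * Real.sqrt d) ≤ Real.exp a - Real.exp b := by
    have : δ * ε / (2 * Real.sqrt d) ≤ δ * ε / Real.sqrt d := by
      apply div_le_div_of_nonneg_left (by positivity) hsd
      linarith
    linarith
  -- denominators bounded by v0 + K e
  have hdea : v0 + K * Real.exp a ≤ v0 + K * Real.exp 1 := by
    have := Real.exp_le_exp.mpr ha1
    nlinarith
  have hdeb : v0 + K * Real.exp b ≤ v0 + K * Real.exp 1 := by
    have := Real.exp_le_exp.mpr hb1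
    nlinarith
  have key : K * Real.exp a / (v0 + K * Real.exp a) -
      K * Real.exp b / (v0 + K * Real.exp b) =
      v0 * K * (Real.exp a - Real.exp b) /
        ((v0 + K * Real.exp a) * (v0 + K * Real.exp b)) := by
    field_simp
    ring
  rw [key]
  have hnum : v0 * K * (δ * ε / (2 * Real.sqrt d)) ≤
      v0 * K * (Real.exp a - Real.exp b) := by
    apply mul_le_mul_of_nonneg_left hgap2 (by positivity)
  calc v0 * K / (v0 + K * Real.exp 1) ^ 2 * (δ * ε / (2 * Real.sqrt d))
      = v0 * K * (δ * ε / (2 * Real.sqrt d)) / (v0 + K * Real.exp 1) ^ 2 := by ring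
    _ ≤ v0 * K * (Real.exp a - Real.exp b) /
        ((v0 + K * Real.exp a) * (v0 + K * Real.exp b)) := by
        apply div_le_div₀ (le_trans (by positivity) hnum) hnum (by positivity : (0:ℝ) < (v0 + K * Real.exp a) * (v0 + K * Real.exp b))
        calc (v0 + K * Real.exp a) * (v0 + K * Real.exp b)
            ≤ (v0 + K * Real.exp 1) * (v0 + K * Real.exp 1) :=
              mul_le_mul hdea hdeb (le_of_lt hdb) (le_of_lt hde)
          _ = (v0 + K * Real.exp 1) ^ 2 := by ring
end

section
/- Let σ: ℝ^K → ℝ^K be the MNL map [σ(z)]_i = e^{z_i}/(v_0 + ∑_{k=1}^K e^{z_k}) with v_0 = 1, let smooth_μ(q) = (1−μ)q + μ·1/(K+1), and let σ⁺ be its inverse on {p ∈ (0,1)^K : ‖p‖₁ < 1} given by [σ⁺(q)]_i = log(q_i/(1 − ‖q‖₁)). Then for any z ∈ ℝ^K and μ ∈ [0, 1/2], the smoothed point z^μ = σ⁺(smooth_μ(σ(z))) satisfies ‖z^μ‖_∞ ≤ log(1 + (K+1)/μ), and for any one-hot outcome y the cross-entropy losses satisfy ℓ(z^μ, y) − ℓ(z,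 y) ≤ 2μ. -/
/-!
Extend σ(z) by the outside option to a probability vector `P` on `Option (Fin K)`; smoothing
mixes `P` with the uniform distribution on these `K + 1` options, giving `Q`, and `σ⁺` is then
`i ↦ log (Q i / Q none)`, so that `σ (σ⁺ Q) = Q`. Every coordinate of `Q` lies in
`[μ / (K + 1), 1]`, which bounds `|log (Q i / Q none)|` by `log ((K + 1) / μ)`; and `Q ≥ (1 - μ) P`
coordinatewise, so each loss grows by at most `-log (1 - μ) ≤ 2μ`.
-/

open Real Finset

section Smoothing

variable {α : Type*} [Fintype α]

noncomputable def smooth (μ : ℝ) (p : α → ℝ) (a : α) : ℝ :=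
  (1 - μ) * p a + μ / Fintype.card α

variable {μ : ℝ} {p : α → ℝ}

lemma div_card_le_smooth (hμ1 : μ ≤ 1) (hp : ∀ a, 0 ≤ p a) (a : α) :
    μ / Fintype.card α ≤ smooth μ p a :=
  le_add_of_nonneg_left (mul_nonneg (by linarith) (hp a))

lemma one_sub_mul_le_smooth (hμ0 : 0 ≤ μ) (a : α) : (1 - μ) * p a ≤ smooth μ p a :=
  le_add_of_nonneg_right (by positivity)

lemma smooth_le_one [Nonempty α] (hμ0 : 0 ≤ μ) (hμ1 : μ ≤ 1) (hp1 : ∀ a, p a ≤ 1) (a : α) :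
    smooth μ p a ≤ 1 := by
  have hcard : (1 : ℝ) ≤ Fintype.card α := by exact_mod_cast Fintype.card_pos
  have h1 : (1 - μ) * p a ≤ 1 - μ := mul_le_of_le_one_right (by linarith) (hp1 a)
  have h2 : μ / Fintype.card α ≤ μ := div_le_self hμ0 hcard
  unfold smooth
  linarith

lemma sum_smooth [Nonempty α] (hp : ∑ a, p a = 1) : ∑ a, smooth μ p a = 1 := by
  have hcard : (Fintype.card α : ℝ) ≠ 0 := by exact_mod_cast Fintype.card_ne_zero
  simp only [smooth, sum_add_distrib, ← mul_sum, hp, sum_const, card_univ, nsmul_eq_mul]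
  field_simp
  ring

end Smoothing

lemma abs_log_sub_log_le {m a b : ℝ} (hm : 0 < m) (hma : m ≤ a) (ha : a ≤ 1) (hmb : m ≤ b)
    (hb : b ≤ 1) : |log a - log b| ≤ -log m := by
  have la := log_le_log hm hma
  have lb := log_le_log hm hmb
  have ua := log_nonpos (hm.trans_le hma).le ha
  have ub := log_nonpos (hm.trans_le hmb).le hb
  rw [abs_le]
  constructor <;> linarith

lemma neg_log_one_sub_le_two_mul {μ : ℝ} (hμ0 : 0 ≤ μ) (hμ2 : μ ≤ 1 / 2) :
    -log (1 - μ) ≤ 2 * μ := by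
  have h := one_sub_inv_le_log_of_pos (x := 1 - μ) (by linarith)
  have h' : (1 - μ)⁻¹ ≤ 1 + 2 * μ := by
    rw [inv_le_iff_one_le_mul₀ (by linarith)]
    nlinarith
  linarith

lemma log_one_div_sub_log_one_div_le {μ p q : ℝ} (hμ1 : μ < 1) (hp : 0 < p)
    (hpq : (1 - μ) * p ≤ q) : log (1 / q) - log (1 / p) ≤ -log (1 - μ) := by
  have hμp : 0 < (1 - μ) * p := mul_pos (by linarith) hp
  have h := log_le_log hμp hpq
  rw [log_mul (by linarith) hp.ne'] at h
  simp only [one_div, log_inv]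
  linarith

namespace MNL

variable {ι : Type*} [Fintype ι]

/-- Choice probabilities of the multinomial logit model with outside option `none` of weight `1`. -/
noncomputable def choiceProb (z : ι → ℝ) : Option ι → ℝ
  | none => 1 / (1 + ∑ k, exp (z k))
  | some i => exp (z i) / (1 + ∑ k, exp (z k))

lemma one_add_sum_exp_pos (z : ι → ℝ) : 0 < 1 + ∑ k, exp (z k) := by positivity

lemma choiceProb_pos (z : ι → ℝ) (c : Option ι) : 0 < choiceProb z c := by
  have := one_add_sum_exp_pos z
  cases c <;> simp only [choiceProb] <;> positivity

lemma sum_choiceProb (z : ι → ℝ) : ∑ c, choiceProb z c = 1 := by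
  have := (one_add_sum_exp_pos z).ne'
  simp only [Fintype.sum_option, choiceProb, ← sum_div, ← add_div]
  exact div_self this

lemma choiceProb_le_one (z : ι → ℝ) (c : Option ι) : choiceProb z c ≤ 1 :=
  sum_choiceProb z ▸ single_le_sum (fun c _ => (choiceProb_pos z c).le) (mem_univ c)

/-- `σ ∘ σ⁺ = id`, with `σ⁺` written through the outside-option coordinate `Q none`. -/
lemma choiceProb_log_div {Q : Option ι → ℝ} (hQ : ∀ c, 0 < Q c) (hsum : ∑ c, Q c = 1) :
    choiceProb (fun i => log (Q (some i) / Q none)) = Q := by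
  have h0 := (hQ none).ne'
  have hden : 1 + ∑ k, exp (log (Q (some k) / Q none)) = 1 / Q none := by
    simp only [fun k => exp_log (div_pos (hQ (some k)) (hQ none)), ← sum_div]
    rw [Fintype.sum_option] at hsum
    field_simp
    linarith
  funext c
  cases c <;> simp only [choiceProb, hden, one_div_one_div]
  rw [exp_log (div_pos (hQ _) (hQ none))]
  field_simp

end MNL

open MNL in
theorem stmt_16 (K : ℕ) (σ : (Fin K → ℝ) → Fin K → ℝ)
    (hσ : ∀ z i, σ z i = Real.exp (z i) / (1 + ∑ k, Real.exp (z k)))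
    (σp : (Fin K → ℝ) → Fin K → ℝ)
    (hσp : ∀ q i, σp q i = Real.log (q i / (1 - ∑ k, q k)))
    (μ : ℝ) (hμ0 : 0 ≤ μ) (hμ2 : μ ≤ 1 / 2)
    (z zμ : Fin K → ℝ)
    (hzμ : zμ = σp (fun i => (1 - μ) * σ z i + μ / (K + 1)))
    (loss : (Fin K → ℝ) → Option (Fin K) → ℝ)
    (hloss : ∀ v c, loss v c = Real.log (1 /
      (match c with
       | none => 1 / (1 + ∑ k, Real.exp (v k))
       | some i => σ v i))) :
    (0 < μ → ∀ i, |zμ i| ≤ Real.log (1 + (K + 1) / μ)) ∧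
    ∀ c, loss zμ c - loss z c ≤ 2 * μ := by
  have hcard : (Fintype.card (Option (Fin K)) : ℝ) = K + 1 := by simp
  have hloss' : ∀ v c, loss v c = log (1 / choiceProb v c) := by
    intro v c; rw [hloss]; cases c <;> simp only [choiceProb, hσ]
  set P := choiceProb z
  set Q := smooth μ P
  have hQ_lb : ∀ c, μ / (K + 1) ≤ Q c := hcard ▸ div_card_le_smooth (by linarith)
    (fun c => (choiceProb_pos z c).le)
  have hQ_pos : ∀ c, 0 < Q c := fun c =>
    (one_sub_mul_le_smooth hμ0 c).trans_lt' (mul_pos (by linarith) (choiceProb_pos z c))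
  have hQ_sum : ∑ c, Q c = 1 := sum_smooth (sum_choiceProb z)
  have hzμ' : zμ = fun i => log (Q (some i) / Q none) := by
    have hQ_none : 1 - ∑ k, Q (some k) = Q none := by rw [Fintype.sum_option] at hQ_sum; linarith
    funext i
    simp only [hzμ, hσp, ← hQ_none, Q, smooth, P, choiceProb, hσ, hcard]
  refine ⟨fun hμ i => ?_, fun c => ?_⟩
  · have hQ_le : ∀ c, Q c ≤ 1 := smooth_le_one hμ0 (by linarith) (choiceProb_le_one z)
    have hm : 0 < μ / (K + 1) := by positivity
    calc |zμ i| = |log (Q (some i)) - log (Q none)| := by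
          rw [hzμ', ← log_div (hQ_pos (some i)).ne' (hQ_pos none).ne']
      _ ≤ -log (μ / (K + 1)) := abs_log_sub_log_le hm (hQ_lb _) (hQ_le _) (hQ_lb _) (hQ_le _)
      _ = log ((K + 1) / μ) := by rw [← log_inv, inv_div]
      _ ≤ log (1 + (K + 1) / μ) := log_le_log (by positivity) (by linarith)
  · rw [hloss', hloss', hzμ', choiceProb_log_div hQ_pos hQ_sum]
    exact (log_one_div_sub_log_one_div_le (by linarith) (choiceProb_pos z c)
      (one_sub_mul_le_smooth hμ0 c)).trans (neg_log_one_sub_le_two_mul hμ0 hμ2)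
end
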